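/- arXiv:2406.16112 — 3 statements merged into one kernel-verified Lean document; each statement's English description precedes it below -/
import Mathlib

section
/- The negative entropy function φ(x) = ∑_{i=1}^d x_i log(x_i) restricted to the probability simplex Δ^{d-1} (with value +∞ outside) is 1-strongly convex with respect to the ℓ¹-norm, i.e., for x, y in the simplex with x having positive entries, φ(y) - φ(x) - ⟨∇φ(x), y-x⟩ ≥ (1/2)‖x - y‖₁². -/
open Real InformationTheory Set

/-! The Bregman divergence of `t ↦ t log t` at `x` is `∑ xᵢ klFun (yᵢ / xᵢ)`, and pointwise
`x klFun (y / x) ≥ 3 (x - y)² / (2y + 4x)`, which reduces to the one-variable inequality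
`3 (t - 1)² ≤ (2t + 4) klFun t`. The weights `2yᵢ + 4xᵢ` sum to `6`, so Sedrakyan's form of
Cauchy–Schwarz gives `(∑ |xᵢ - yᵢ|)² ≤ 6 ∑ (xᵢ - yᵢ)² / (2yᵢ + 4xᵢ) ≤ 2 ∑ xᵢ klFun (yᵢ / xᵢ)`. -/

lemma monotoneOn_add_one_mul_log_sub_two_mul :
    MonotoneOn (fun s : ℝ => (s + 1) * log s - 2 * s) (Ioi 0) := by
  have hderiv : ∀ s : ℝ, 0 < s →
      HasDerivAt (fun s : ℝ => (s + 1) * log s - 2 * s) (log s + 1 + s⁻¹ - 2) s := by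
    intro s hs
    refine ((((hasDerivAt_id' s).add_const 1).mul (hasDerivAt_log hs.ne')).sub
      ((hasDerivAt_id' s).const_mul 2)).congr_deriv ?_
    field_simp
    ring
  refine monotoneOn_of_deriv_nonneg (convex_Ioi 0)
    (fun s hs => (hderiv s hs).continuousAt.continuousWithinAt)
    (fun s hs => (hderiv s (interior_subset hs)).differentiableAt.differentiableWithinAt)
    fun s hs => ?_
  rw [interior_Ioi] at hs
  rw [(hderiv s hs).deriv]
  linarith [one_sub_inv_le_log_of_pos (show 0 < s from hs)]

lemma three_mul_sq_sub_one_le_klFun_mul {t : ℝ} (ht : 0 ≤ t) :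
    3 * (t - 1) ^ 2 ≤ klFun t * (2 * t + 4) := by
  set F : ℝ → ℝ := fun s => klFun s * (2 * s + 4) - 3 * (s - 1) ^ 2
  -- `F' = 4 (G s - G 1)` changes sign at `1` because `G` is monotone, so `F` is minimal at `1`.
  set G : ℝ → ℝ := fun s => (s + 1) * log s - 2 * s
  have hderiv : ∀ s, 0 < s → HasDerivAt F (4 * (G s - G 1)) s := by
    intro s hs
    refine ((hasDerivAt_klFun hs.ne').mul (((hasDerivAt_id' s).const_mul 2).add_const 4)).sub
      ((((hasDerivAt_id' s).sub_const 1).pow 2).const_mul 3) |>.congr_deriv ?_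
    simp only [G, klFun]
    norm_num
    ring
  have hcont : Continuous F := by fun_prop [continuous_klFun]
  have hmono := monotoneOn_add_one_mul_log_sub_two_mul
  have hmin : IsMinOn F (Ici 0) 1 := by
    refine isMinOn_Ici_of_deriv hcont.continuousAt hcont.continuousAt
      (fun s hs => (hderiv s hs.1).differentiableAt.differentiableWithinAt)
      (fun s hs => (hderiv s (zero_lt_one.trans hs)).differentiableAt.differentiableWithinAt)
      (fun s hs => ?_) (fun s hs => ?_)
    · rw [(hderiv s hs.1).deriv]
      linarith [hmono hs.1 (mem_Ioi.2 zero_lt_one) hs.2.le]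
    · rw [(hderiv s (zero_lt_one.trans hs)).deriv]
      linarith [hmono (mem_Ioi.2 zero_lt_one) (mem_Ioi.2 (zero_lt_one.trans hs)) (le_of_lt hs)]
  have hF : F 1 ≤ F t := hmin (mem_Ici.2 ht)
  simp only [F, klFun_one] at hF
  linarith

lemma mul_log_sub_mul_log_sub_eq_mul_klFun {x y : ℝ} (hx : 0 < x) :
    y * log y - x * log x - (1 + log x) * (y - x) = x * klFun (y / x) := by
  rcases eq_or_ne y 0 with rfl | hy
  · simp [klFun_zero]; ring
  · rw [klFun, log_div hy (ne_of_gt hx)]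
    field_simp
    ring

lemma sq_sub_div_le_mul_klFun {x y : ℝ} (hx : 0 < x) (hy : 0 ≤ y) :
    3 * (x - y) ^ 2 / (2 * y + 4 * x) ≤ x * klFun (y / x) := by
  rw [div_le_iff₀ (by positivity)]
  calc 3 * (x - y) ^ 2 = x ^ 2 * (3 * (y / x - 1) ^ 2) := by field_simp; ring
    _ ≤ x ^ 2 * (klFun (y / x) * (2 * (y / x) + 4)) := by
      exact mul_le_mul_of_nonneg_left
        (three_mul_sq_sub_one_le_klFun_mul (div_nonneg hy hx.le)) (sq_nonneg x)
    _ = x * klFun (y / x) * (2 * y + 4 * x) := by field_simp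

theorem sq_sum_abs_sub_le_two_mul_sum_mul_klFun {ι : Type*} [Fintype ι] {x y : ι → ℝ}
    (hx0 : ∀ i, 0 < x i) (hx1 : ∑ i, x i = 1) (hy0 : ∀ i, 0 ≤ y i) (hy1 : ∑ i, y i = 1) :
    (∑ i, |x i - y i|) ^ 2 ≤ 2 * ∑ i, x i * klFun (y i / x i) := by
  have hw : ∑ i, (2 * y i + 4 * x i) = 6 := by
    rw [Finset.sum_add_distrib, ← Finset.mul_sum, ← Finset.mul_sum, hx1, hy1]
    norm_num
  have hsedrakyan := Finset.sq_sum_div_le_sum_sq_div Finset.univ (fun i => |x i - y i|)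
    (g := fun i => 2 * y i + 4 * x i) fun i _ => by linarith [hx0 i, hy0 i]
  simp only [hw, sq_abs] at hsedrakyan
  calc (∑ i, |x i - y i|) ^ 2 = 2 * 3 * ((∑ i, |x i - y i|) ^ 2 / 6) := by ring
    _ ≤ 2 * ∑ i, 3 * (x i - y i) ^ 2 / (2 * y i + 4 * x i) := by
      simp only [← Finset.mul_sum, mul_div_assoc]
      linarith
    _ ≤ 2 * ∑ i, x i * klFun (y i / x i) := by
      gcongr with i
      exact sq_sub_div_le_mul_klFun (hx0 i) (hy0 i)

/-- The negative entropy on the probability simplex is 1-strongly convex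
w.r.t. the ℓ¹-norm. -/
theorem neg_entropy_strongly_convex_l1 (d : ℕ)
    (x y : Fin d → ℝ)
    (hx0 : ∀ i, 0 < x i) (hx1 : ∑ i, x i = 1)
    (hy0 : ∀ i, 0 ≤ y i) (hy1 : ∑ i, y i = 1) :
    (∑ i, y i * Real.log (y i)) - (∑ i, x i * Real.log (x i)) -
        (∑ i, (1 + Real.log (x i)) * (y i - x i))
      ≥ 1 / 2 * (∑ i, |x i - y i|) ^ 2 := by
  rw [← Finset.sum_sub_distrib, ← Finset.sum_sub_distrib]
  simp only [mul_log_sub_mul_log_sub_eq_mul_klFun (hx0 _)]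
  linarith [sq_sum_abs_sub_le_two_mul_sum_mul_klFun hx0 hx1 hy0 hy1]
end

section
/- If F: ℝ^d → ℝ satisfies the tangential cone condition with constant η < 1/2 and F(ŷ) = 0, then for any x, the Kaczmarz-type step with relaxation σ > 0 satisfies: -2t⟨∇F(x), x - ŷ⟩ + t²‖∇F(x)‖² ≤ -2σ(1/2 - η)F(x)²/‖∇F(x)‖² where t = σF(x)/‖∇F(x)‖² when σ ≤ 1, assuming ∇F(x) ≠ 0. -/
open RealInnerProductSpace

/-! At a zero `ŷ` of `F` the tangential cone condition says that `⟪∇F(x), x - ŷ⟫` lies within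
`η |F(x)|` of `F(x)`, hence `F(x) ⟪∇F(x), x - ŷ⟫ ≥ (1 - η) F(x)²`. Inserting this and `σ² ≤ σ`
into the expanded step `-2 t ⟪∇F(x), x - ŷ⟫ + t² ‖∇F(x)‖²` gives the bound. -/

theorem one_sub_mul_sq_le_mul_of_abs_sub_le {η a s : ℝ} (h : |a - s| ≤ η * |a|) :
    (1 - η) * a ^ 2 ≤ a * s := by
  have hcross : a * (a - s) ≤ η * a ^ 2 :=
    calc a * (a - s) ≤ |a| * |a - s| := (le_abs_self _).trans (abs_mul a (a - s)).le
      _ ≤ |a| * (η * |a|) := mul_le_mul_of_nonneg_left h (abs_nonneg a)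
      _ = η * a ^ 2 := by rw [← sq_abs a]; ring
  linarith

theorem relaxed_step_le {η σ a s N : ℝ} (hσ0 : 0 ≤ σ) (hσ1 : σ ≤ 1) (hN : 0 ≤ N)
    (has : (1 - η) * a ^ 2 ≤ a * s) :
    -2 * (σ * a / N) * s + (σ * a / N) ^ 2 * N ≤ -2 * σ * (1 / 2 - η) * a ^ 2 / N := by
  rcases hN.eq_or_lt with rfl | hN
  · simp -- `x / 0 = 0` makes both sides vanish
  have hnum : -2 * σ * (a * s) + σ ^ 2 * a ^ 2 ≤ -2 * σ * (1 / 2 - η) * a ^ 2 := by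
    linarith [mul_le_mul_of_nonneg_left has hσ0,
      mul_nonneg (mul_nonneg hσ0 (sub_nonneg.2 hσ1)) (sq_nonneg a)]
  calc -2 * (σ * a / N) * s + (σ * a / N) ^ 2 * N
      = (-2 * σ * (a * s) + σ ^ 2 * a ^ 2) / N := by field_simp
    _ ≤ -2 * σ * (1 / 2 - η) * a ^ 2 / N := div_le_div_of_nonneg_right hnum hN.le

theorem kaczmarz_step_descent_general (d : ℕ)
    (F : EuclideanSpace ℝ (Fin d) → ℝ)
    (g : EuclideanSpace ℝ (Fin d) → EuclideanSpace ℝ (Fin d))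
    (η : ℝ)
    (htcc : ∀ u v, |F u + ⟪g u, v - u⟫ - F v| ≤ η * |F u - F v|)
    (yhat : EuclideanSpace ℝ (Fin d)) (hyhat : F yhat = 0)
    (σ : ℝ) (hσ0 : 0 < σ) (hσ1 : σ ≤ 1)
    (x : EuclideanSpace ℝ (Fin d))
    (t : ℝ) (ht : t = σ * F x / ‖g x‖ ^ 2) :
    -2 * t * ⟪g x, x - yhat⟫ + t ^ 2 * ‖g x‖ ^ 2
      ≤ -2 * σ * (1 / 2 - η) * (F x) ^ 2 / ‖g x‖ ^ 2 := by
  have hcone : |F x - ⟪g x, x - yhat⟫| ≤ η * |F x| := by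
    have h := htcc x yhat
    rwa [hyhat, ← neg_sub x yhat, inner_neg_right, sub_zero, sub_zero, ← sub_eq_add_neg] at h
  subst ht
  exact relaxed_step_le hσ0.le hσ1 (by positivity) (one_sub_mul_sq_le_mul_of_abs_sub_le hcone)

/-- Descent estimate for the relaxed Kaczmarz-type step under the tangential
cone condition with `η < 1/2`. -/
theorem kaczmarz_step_descent (d : ℕ)
    (F : EuclideanSpace ℝ (Fin d) → ℝ)
    (g : EuclideanSpace ℝ (Fin d) → EuclideanSpace ℝ (Fin d))
    (hg : ∀ z, HasGradientAt F (g z) z)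
    (η : ℝ) (hη0 : 0 < η) (hη : η < 1 / 2)
    (htcc : ∀ u v, |F u + ⟪g u, v - u⟫ - F v| ≤ η * |F u - F v|)
    (yhat : EuclideanSpace ℝ (Fin d)) (hyhat : F yhat = 0)
    (σ : ℝ) (hσ0 : 0 < σ) (hσ1 : σ ≤ 1)
    (x : EuclideanSpace ℝ (Fin d)) (hgx : g x ≠ 0)
    (t : ℝ) (ht : t = σ * F x / ‖g x‖ ^ 2) :
    -2 * t * ⟪g x, x - yhat⟫ + t ^ 2 * ‖g x‖ ^ 2
      ≤ -2 * σ * (1 / 2 - η) * (F x) ^ 2 / ‖g x‖ ^ 2 :=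
  kaczmarz_step_descent_general d F g η htcc yhat hyhat σ hσ0 hσ1 x t ht
end

section
/- Let F': matrix-valued Jacobian of F: ℝ^d → ℝ^n have full column rank at x. If every component F_i satisfies |⟨∇F_i(x), x - x̂⟩| ≤ (1+η)|F_i(x) - F_i(x̂)| and F(x̂) = 0, then ∑_{i=1}^n |F_i(x)|² ≥ ‖F'(x)(x - x̂)‖₂²/(1+η)², and hence ‖F(x)‖₂² ≥ σ_min(F'(x))²‖x - x̂‖₂²/(1+η)². -/
/-!
With `F x̂ = 0`, the tangential cone condition bounds each coordinate of `F'(x)(x - x̂)` by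
`(1 + η) |F_i(x)|`; summing squares compares the two Euclidean norms, and full column rank
bounds `‖F'(x)(x - x̂)‖` below by `s ‖x - x̂‖`.
-/

open RealInnerProductSpace

theorem EuclideanSpace.norm_sq_le_sq_mul_norm_sq_of_abs_le {ι : Type*} [Fintype ι]
    {u w : EuclideanSpace ℝ ι} {c : ℝ} (h : ∀ i, |u i| ≤ c * |w i|) :
    ‖u‖ ^ 2 ≤ c ^ 2 * ‖w‖ ^ 2 := by
  simp only [EuclideanSpace.norm_sq_eq, Real.norm_eq_abs, sq_abs, Finset.mul_sum]
  refine Finset.sum_le_sum fun i _ => ?_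
  calc u i ^ 2 ≤ (c * |w i|) ^ 2 := sq_le_sq.mpr ((h i).trans (le_abs_self _))
    _ = c ^ 2 * w i ^ 2 := by rw [mul_pow, sq_abs]

theorem residual_lower_bound_general (d n : ℕ)
    (F : EuclideanSpace ℝ (Fin d) → EuclideanSpace ℝ (Fin n))
    (g : Fin n → EuclideanSpace ℝ (Fin d) → EuclideanSpace ℝ (Fin d))
    (η : ℝ)
    (x xhat : EuclideanSpace ℝ (Fin d))
    (J : EuclideanSpace ℝ (Fin d) →ₗ[ℝ] EuclideanSpace ℝ (Fin n))
    (hJ : ∀ v i, J v i = ⟪g i x, v⟫)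
    (s : ℝ) (hs : 0 < s) (hfullrank : ∀ v, s * ‖v‖ ≤ ‖J v‖)
    (htcc : ∀ i, |⟪g i x, x - xhat⟫| ≤ (1 + η) * |F x i - F xhat i|)
    (hsol : F xhat = 0) :
    (∑ i, |F x i| ^ 2) ≥ ‖J (x - xhat)‖ ^ 2 / (1 + η) ^ 2 ∧
    ‖F x‖ ^ 2 ≥ s ^ 2 * ‖x - xhat‖ ^ 2 / (1 + η) ^ 2 := by
  have hresidual : ∑ i, |F x i| ^ 2 = ‖F x‖ ^ 2 := by
    simp only [EuclideanSpace.norm_sq_eq, Real.norm_eq_abs]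
  have hJF : ‖J (x - xhat)‖ ^ 2 ≤ (1 + η) ^ 2 * ‖F x‖ ^ 2 :=
    EuclideanSpace.norm_sq_le_sq_mul_norm_sq_of_abs_le fun i => by
      simpa only [hJ, hsol, PiLp.zero_apply, sub_zero] using htcc i
  have hrank : s ^ 2 * ‖x - xhat‖ ^ 2 ≤ ‖J (x - xhat)‖ ^ 2 := by
    rw [← mul_pow]
    exact pow_le_pow_left₀ (by positivity) (hfullrank _) 2
  have hfirst : ‖J (x - xhat)‖ ^ 2 / (1 + η) ^ 2 ≤ ‖F x‖ ^ 2 :=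
    div_le_of_le_mul₀ (sq_nonneg _) (sq_nonneg _) (by linarith)
  refine ⟨hresidual ▸ hfirst, le_trans ?_ hfirst⟩
  exact div_le_div_of_nonneg_right hrank (sq_nonneg _)

/-- Residual lower bound from the tangential cone condition and full column
rank of the Jacobian. -/
theorem residual_lower_bound (d n : ℕ)
    (F : EuclideanSpace ℝ (Fin d) → EuclideanSpace ℝ (Fin n))
    (g : Fin n → EuclideanSpace ℝ (Fin d) → EuclideanSpace ℝ (Fin d))
    (hg : ∀ i x, HasGradientAt (fun z => F z i) (g i x) x)
    (η : ℝ) (hη : 0 < η)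
    (x xhat : EuclideanSpace ℝ (Fin d))
    (J : EuclideanSpace ℝ (Fin d) →ₗ[ℝ] EuclideanSpace ℝ (Fin n))
    (hJ : ∀ v i, J v i = ⟪g i x, v⟫)
    (s : ℝ) (hs : 0 < s) (hfullrank : ∀ v, s * ‖v‖ ≤ ‖J v‖)
    (htcc : ∀ i, |⟪g i x, x - xhat⟫| ≤ (1 + η) * |F x i - F xhat i|)
    (hsol : F xhat = 0) :
    (∑ i, |F x i| ^ 2) ≥ ‖J (x - xhat)‖ ^ 2 / (1 + η) ^ 2 ∧
    ‖F x‖ ^ 2 ≥ s ^ 2 * ‖x - xhat‖ ^ 2 / (1 + η) ^ 2 :=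
  residual_lower_bound_general d n F g η x xhat J hJ s hs hfullrank htcc hsol
end
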